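/- For any natural numbers s₀, …, s_{f−1}, let M = R/(X₀^{s₀+1}, …, X_{f−1}^{s_{f−1}+1}). Then Ext¹_R(M, k) is isomorphic as an R-module to k^f; in particular it is an f-dimensional k-vector space. (Lemma 2.4 of the paper.) -/

import Mathlib

/-!
The presentation `R^f → R → M`, `eᵢ ↦ Xᵢ^{sᵢ+1}`, extends to a projective resolution of `M`.
Applying `Hom(-, k)` kills every differential at `Hom(R^f, k)`: the image of `R^f → R` lies in
the maximal ideal, and so does every coefficient of a syzygy `∑ vᵢ Xᵢ^{sᵢ+1} = 0` (compare the
coefficients of `Xᵢ^{sᵢ+1}`). Hence `Ext¹_R(M, k) ≅ Hom_R(R^f, k) ≅ k^f`.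
-/

open CategoryTheory

/-- The `R`-module `M = R/(X₀^{s₀+1}, …, X_{f−1}^{s_{f−1}+1})`,
where `R = k[[X₀, …, X_{f−1}]]`. -/
noncomputable def KoszulQuot (k : Type) [Field k] (f : ℕ) (s : Fin f → ℕ) :
    Type :=
  MvPowerSeries (Fin f) k ⧸
    Ideal.span (Set.range fun i : Fin f =>
      (MvPowerSeries.X i : MvPowerSeries (Fin f) k) ^ (s i + 1))

noncomputable instance (k : Type) [Field k] (f : ℕ) (s : Fin f → ℕ) :
    AddCommGroup (KoszulQuot k f s) :=
  inferInstanceAs (AddCommGroup (MvPowerSeries (Fin f) k ⧸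
    Ideal.span (Set.range fun i : Fin f =>
      (MvPowerSeries.X i : MvPowerSeries (Fin f) k) ^ (s i + 1))))

noncomputable instance (k : Type) [Field k] (f : ℕ) (s : Fin f → ℕ) :
    Module (MvPowerSeries (Fin f) k) (KoszulQuot k f s) :=
  inferInstanceAs (Module (MvPowerSeries (Fin f) k) (MvPowerSeries (Fin f) k ⧸
    Ideal.span (Set.range fun i : Fin f =>
      (MvPowerSeries.X i : MvPowerSeries (Fin f) k) ^ (s i + 1))))

/-- The residue field `k = R/(X₀, …, X_{f−1})` as an `R`-module. -/
noncomputable def ResidueField (k : Type) [Field k] (f : ℕ) : Type :=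
  MvPowerSeries (Fin f) k ⧸
    Ideal.span (Set.range fun i : Fin f =>
      (MvPowerSeries.X i : MvPowerSeries (Fin f) k))

noncomputable instance (k : Type) [Field k] (f : ℕ) :
    AddCommGroup (ResidueField k f) :=
  inferInstanceAs (AddCommGroup (MvPowerSeries (Fin f) k ⧸
    Ideal.span (Set.range fun i : Fin f =>
      (MvPowerSeries.X i : MvPowerSeries (Fin f) k))))

noncomputable instance (k : Type) [Field k] (f : ℕ) :
    Module (MvPowerSeries (Fin f) k) (ResidueField k f) :=
  inferInstanceAs (Module (MvPowerSeries (Fin f) k) (MvPowerSeries (Fin f) k ⧸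
    Ideal.span (Set.range fun i : Fin f =>
      (MvPowerSeries.X i : MvPowerSeries (Fin f) k))))

/-- The `R`-module `Ext¹_R(M, k)`. -/
noncomputable def ExtOne (k : Type) [Field k] (f : ℕ) (s : Fin f → ℕ) :
    ModuleCat (MvPowerSeries (Fin f) k) :=
  ((Ext (MvPowerSeries (Fin f) k) (ModuleCat (MvPowerSeries (Fin f) k)) 1).obj
      (Opposite.op (ModuleCat.of (MvPowerSeries (Fin f) k) (KoszulQuot k f s)))).obj
    (ModuleCat.of (MvPowerSeries (Fin f) k) (ResidueField k f))

open CategoryTheory.Limits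

noncomputable section

namespace CategoryTheory

lemma Projective.d_comp {C : Type*} [Category* C] [Abelian C] [EnoughProjectives C] {X Y : C}
    (f : X ⟶ Y) : Projective.d f ≫ f = 0 :=
  (Category.assoc _ _ _).trans ((congrArg _ (kernel.condition f)).trans comp_zero)

namespace ProjectiveResolution

variable {C : Type*} [Category* C] [Abelian C] [EnoughProjectives C]

section Presentation

variable {X P₀ P₁ : C} (d : P₁ ⟶ P₀)

def ofPresentationComplex : ChainComplex C ℕ :=
  ChainComplex.mk' P₀ P₁ d fun f => ⟨_, Projective.d f, Projective.d_comp f⟩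

lemma ofPresentationComplex_d_one_zero : (ofPresentationComplex d).d 1 0 = d :=
  ChainComplex.mk'_d_1_0 ..

lemma ofPresentationComplex_exactAt_succ (n : ℕ) : (ofPresentationComplex d).ExactAt (n + 1) := by
  rw [HomologicalComplex.exactAt_iff' _ (n + 2) (n + 1) n (by simp) (by simp)]
  let g := (ofPresentationComplex d).d (n + 1) n
  refine (ShortComplex.exact_iff_of_iso (S₁ := (ofPresentationComplex d).sc' (n + 2) (n + 1) n)
    (S₂ := ShortComplex.mk _ _ (Projective.d_comp g))
    (ShortComplex.isoMk ?_ (Iso.refl _) (Iso.refl _) ?_ ?_)).2 (exact_d_f g)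
  · exact (ChainComplex.mk'XIso _ _ _ _ n : (ofPresentationComplex d).X (n + 2) ≅ _)
  · exact (ChainComplex.mk'_d _ _ _ _ n).symm.trans (Category.comp_id _).symm
  · exact (Category.id_comp _).trans (Category.comp_id _).symm

instance [Projective P₀] [Projective P₁] (n : ℕ) : Projective ((ofPresentationComplex d).X n) := by
  obtain (_ | _ | _ | n) := n
  · exact ‹Projective P₀›
  · exact ‹Projective P₁›
  all_goals apply Projective.projective_over

def ofPresentation [Projective P₀] [Projective P₁] (π : P₀ ⟶ X) [Epi π] (w : d ≫ π = 0)
    (hexact : (ShortComplex.mk d π w).Exact) : ProjectiveResolution X where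
  complex := ofPresentationComplex d
  π := (ChainComplex.toSingle₀Equiv _ _).symm ⟨π, (ofPresentationComplex_d_one_zero d).symm ▸ w⟩
  quasiIso := ⟨fun n => by
    cases n with
    | zero =>
      rw [ChainComplex.quasiIsoAt₀_iff, ShortComplex.quasiIso_iff_of_zeros']
      · refine (ShortComplex.exact_and_epi_g_iff_of_iso ?_).2 ⟨hexact, by dsimp; infer_instance⟩
        refine ShortComplex.isoMk (Iso.refl _) (Iso.refl _) (Iso.refl _) ?_ ?_
        · simp only [Iso.refl_hom]
          erw [Category.id_comp, Category.comp_id]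
          exact (ofPresentationComplex_d_one_zero d).symm
        · simp only [Iso.refl_hom]
          erw [Category.id_comp, Category.comp_id]
          exact (ChainComplex.toSingle₀Equiv_symm_apply_f_zero
            (C := ofPresentationComplex d) π _).symm
      all_goals rfl
    | succ n =>
      rw [quasiIsoAt_iff_exactAt']
      · exact ofPresentationComplex_exactAt_succ d n
      · exact ChainComplex.exactAt_succ_single_obj _ _⟩

end Presentation

variable (R : Type*) [Ring R] [Linear R C] {X : C} (P : ProjectiveResolution X) (Y : C) (n : ℕ)

def extSuccIsoOfCompEqZero
    (h₁ : ∀ φ : P.complex.X n ⟶ Y, P.complex.d (n + 1) n ≫ φ = 0)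
    (h₂ : ∀ φ : P.complex.X (n + 1) ⟶ Y, P.complex.d (n + 2) (n + 1) ≫ φ = 0) :
    ((Ext R C (n + 1)).obj (Opposite.op X)).obj Y ≅ ModuleCat.of R (P.complex.X (n + 1) ⟶ Y) :=
  P.isoExt (n + 1) Y ≪≫
    ((P.complex.linearYonedaObj R Y).isoHomologyπ n (n + 1) (by simp)
      (by ext φ; exact h₁ φ)).symm ≪≫
    (P.complex.linearYonedaObj R Y).iCyclesIso (n + 1) (n + 2) (by simp) (by ext φ; exact h₂ φ)

end ProjectiveResolution

end CategoryTheory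

namespace MvPowerSeries

variable {σ R : Type*}

theorem mem_span_range_X_of_constantCoeff_eq_zero [Finite σ] [CommRing R] {p : MvPowerSeries σ R}
    (hp : constantCoeff p = 0) : p ∈ Ideal.span (Set.range X) := by
  -- In the adic completion of `MvPolynomial σ R` at the variables, the extension of that ideal is
  -- the kernel of reduction modulo it, and reduction only sees the constant coefficient.
  let e := (toAdicCompletionAlgEquiv σ R).toRingEquiv
  have map_span_X : (Ideal.span (Set.range X)).map e =
      (MvPolynomial.idealOfVars σ R).map (algebraMap ..) := by
    simp_rw [e, Ideal.map_span, ← Set.range_comp]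
    congr 2
    ext1
    simp [AdicCompletion.algebraMap_apply, ← MvPolynomial.coe_X, toAdicCompletion_coe]
  suffices e p ∈ (Ideal.span (Set.range X)).map e by
    obtain ⟨q, hq, hqp⟩ := (Ideal.mem_map_of_equiv e _).1 this
    rwa [← e.injective hqp]
  rw [map_span_X, ← AdicCompletion.ker_evalOneₐ_eq_map _ (MvPolynomial.idealOfVars_fg σ R),
    RingHom.mem_ker]
  change Ideal.Quotient.mk _ (truncTotal 1 p) = 0
  rw [Ideal.Quotient.eq_zero_iff_mem, ← pow_one (MvPolynomial.idealOfVars σ R),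
    MvPolynomial.mem_pow_idealOfVars_iff']
  intro x hx
  rw [coeff_truncTotal _ hx, (Finsupp.degree_eq_zero_iff x).1 (Nat.lt_one_iff.1 hx),
    coeff_zero_eq_constantCoeff_apply, hp]

theorem constantCoeff_eq_zero_of_sum_mul_X_pow_eq_zero [Fintype σ] [CommSemiring R] (s : σ → ℕ)
    {v : σ → MvPowerSeries σ R} (hv : ∑ i, v i * X i ^ (s i + 1) = 0) (i : σ) :
    constantCoeff (v i) = 0 := by
  classical
  have h := congrArg (coeff (Finsupp.single i (s i + 1))) hv
  simp only [map_sum, map_zero, X_pow_eq, coeff_mul_monomial, mul_one] at h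
  have single_not_le : ∀ j ≠ i, ¬Finsupp.single j (s j + 1) ≤ Finsupp.single i (s i + 1) := by
    intro j hji hle
    have := Finsupp.single_le_iff.1 hle
    rw [Finsupp.single_apply, if_neg hji.symm] at this
    omega
  rwa [Finset.sum_eq_single i (fun j _ hji => if_neg (single_not_le j hji)) (by simp),
    if_pos le_rfl, tsub_self, coeff_zero_eq_constantCoeff_apply] at h

end MvPowerSeries

section Annihilator

variable {A N : Type*} [CommSemiring A] [AddCommMonoid N] [Module A N]

lemma LinearMap.map_eq_zero_of_mem_annihilator (ψ : A →ₗ[A] N) {x : A}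
    (hx : x ∈ Module.annihilator A N) : ψ x = 0 := by
  rw [← mul_one x, ← smul_eq_mul, map_smul]
  exact Module.mem_annihilator.1 hx _

lemma LinearMap.pi_map_eq_zero_of_mem_annihilator {ι : Type*} [Fintype ι] [DecidableEq ι]
    (φ : (ι → A) →ₗ[A] N) {v : ι → A} (hv : ∀ i, v i ∈ Module.annihilator A N) : φ v = 0 := by
  rw [← Finset.univ_sum_single v, map_sum]
  exact Finset.sum_eq_zero fun i _ =>
    (φ ∘ₗ LinearMap.single A (fun _ => A) i).map_eq_zero_of_mem_annihilator (hv i)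

end Annihilator

section QuotientExt

universe u

variable {A ι : Type u} [CommRing A] [Fintype ι] [DecidableEq ι] (g : ι → A)

def quotientSpanResolution :
    ProjectiveResolution (ModuleCat.of A (A ⧸ Ideal.span (Set.range g))) :=
  haveI := ModuleCat.epi_as_hom''_mkQ (X := ModuleCat.of A A) (Ideal.span (Set.range g))
  ProjectiveResolution.ofPresentation (P₀ := ModuleCat.of A A) (P₁ := ModuleCat.of A (ι → A))
    (ModuleCat.ofHom (Fintype.linearCombination A g))
    (ModuleCat.ofHom (Ideal.span (Set.range g)).mkQ)
    (by
      ext i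
      exact (Submodule.Quotient.mk_eq_zero _).2 (Ideal.subset_span
        ⟨i, ((Fintype.linearCombination_apply_single A g i 1).trans (one_smul A _)).symm⟩))
    (by
      rw [ShortComplex.moduleCat_exact_iff_range_eq_ker]
      exact (Fintype.range_linearCombination A g).trans (Submodule.ker_mkQ _).symm)

variable {g} {m : Ideal A}

lemma quotientSpanResolution_d_one_zero_comp_eq_zero (hg : Ideal.span (Set.range g) ≤ m)
    (ψ : (quotientSpanResolution g).complex.X 0 ⟶ ModuleCat.of A (A ⧸ m)) :
    (quotientSpanResolution g).complex.d 1 0 ≫ ψ = 0 := by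
  refine ModuleCat.hom_ext (LinearMap.ext fun v => ψ.hom.map_eq_zero_of_mem_annihilator ?_)
  rw [Ideal.annihilator_quotient]
  exact hg ((Fintype.range_linearCombination A g).le (LinearMap.mem_range_self _ v))

lemma quotientSpanResolution_d_two_one_comp_eq_zero
    (hmin : ∀ v, Fintype.linearCombination A g v = 0 → ∀ i, v i ∈ m)
    (φ : (quotientSpanResolution g).complex.X 1 ⟶ ModuleCat.of A (A ⧸ m)) :
    (quotientSpanResolution g).complex.d 2 1 ≫ φ = 0 := by
  refine ModuleCat.hom_ext (LinearMap.ext fun u => ?_)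
  let syzygy : ι → A := (quotientSpanResolution g).complex.d 2 1 u
  have : Fintype.linearCombination A g syzygy = 0 :=
    congrArg (fun f => f.hom u) ((quotientSpanResolution g).complex.d_comp_d 2 1 0)
  refine φ.hom.pi_map_eq_zero_of_mem_annihilator fun i => ?_
  rw [Ideal.annihilator_quotient]
  exact hmin _ this i

def extOneQuotientSpanLinearEquiv (hg : Ideal.span (Set.range g) ≤ m)
    (hmin : ∀ v, Fintype.linearCombination A g v = 0 → ∀ i, v i ∈ m) :
    ((Ext A (ModuleCat.{u} A) 1).obj
        (Opposite.op (ModuleCat.of A (A ⧸ Ideal.span (Set.range g))))).obj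
      (ModuleCat.of A (A ⧸ m)) ≃ₗ[A] (ι → A ⧸ m) :=
  ((quotientSpanResolution g).extSuccIsoOfCompEqZero A _ 0
      (quotientSpanResolution_d_one_zero_comp_eq_zero hg)
      (quotientSpanResolution_d_two_one_comp_eq_zero hmin)).toLinearEquiv ≪≫ₗ
    ModuleCat.homLinearEquiv ≪≫ₗ LinearEquiv.piRing A (A ⧸ m) ι A

end QuotientExt

end

theorem statement_0 (k : Type) [Field k] (f : ℕ) (s : Fin f → ℕ) :
    Nonempty
      (ExtOne k f s ≃ₗ[MvPowerSeries (Fin f) k] (Fin f → ResidueField k f)) := by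
  have span_X_pow_le :
      Ideal.span (Set.range fun i => (MvPowerSeries.X i : MvPowerSeries (Fin f) k) ^ (s i + 1))
        ≤ Ideal.span (Set.range MvPowerSeries.X) :=
    Ideal.span_le.2 <| Set.range_subset_iff.2 fun i =>
      Ideal.pow_mem_of_mem _ (Ideal.subset_span (Set.mem_range_self i)) _ (s i).succ_pos
  exact ⟨extOneQuotientSpanLinearEquiv span_X_pow_le fun v hv i =>
    MvPowerSeries.mem_span_range_X_of_constantCoeff_eq_zero
      (MvPowerSeries.constantCoeff_eq_zero_of_sum_mul_X_pow_eq_zero s hv i)⟩
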